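/- If u ∈ C^∞(D(ρ)\{0}) is radially symmetric and solves the Willmore graph equation on the punctured disk, then there exists λ ∈ ℝ such that the radial flux f satisfies f(r) = λ/r; equivalently w = u' satisfies w'' + (w/r)' = (5w/(2(1+w²)))(w')² + (w³/(2r²))(3+w²) + (λ/r)(1+w²)^{5/2} on (0,ρ). -/

import Mathlib

open Real Set

noncomputable def grad2 (F : ℝ × ℝ → ℝ) (p : ℝ × ℝ) : ℝ × ℝ :=
  (fderiv ℝ F p (1, 0), fderiv ℝ F p (0, 1))

noncomputable def div2 (F : ℝ × ℝ → ℝ × ℝ) (p : ℝ × ℝ) : ℝ :=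
  fderiv ℝ (fun q => (F q).1) p (1, 0) + fderiv ℝ (fun q => (F q).2) p (0, 1)

/-- The area element `v = √(1+|Du|²)` of the graph of `U`. -/
noncomputable def areaEl (U : ℝ × ℝ → ℝ) (p : ℝ × ℝ) : ℝ :=
  Real.sqrt (1 + (grad2 U p).1 ^ 2 + (grad2 U p).2 ^ 2)

/-- The mean curvature `H = div(DU/v)` of the graph of `U`. -/
noncomputable def meanCurv (U : ℝ × ℝ → ℝ) (p : ℝ × ℝ) : ℝ :=
  div2 (fun q => ((grad2 U q).1 / areaEl U q, (grad2 U q).2 / areaEl U q)) p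

/-- The Willmore flux vector field
`(1/v)[(I - DU⊗DU/v²) D(vH) - ½ H² DU]`. -/
noncomputable def willmoreVF (U : ℝ × ℝ → ℝ) (p : ℝ × ℝ) : ℝ × ℝ :=
  (1 / areaEl U p) •
    (((grad2 (fun q => areaEl U q * meanCurv U q) p) -
      (((grad2 U p).1 * (grad2 (fun q => areaEl U q * meanCurv U q) p).1 +
        (grad2 U p).2 * (grad2 (fun q => areaEl U q * meanCurv U q) p).2) /
          (areaEl U p) ^ 2) • grad2 U p) -
      ((meanCurv U p) ^ 2 / 2) • grad2 U p)

noncomputable def lin2 (a b : ℝ) : ℝ × ℝ →L[ℝ] ℝ :=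
  a • ContinuousLinearMap.fst ℝ ℝ ℝ + b • ContinuousLinearMap.snd ℝ ℝ ℝ
@[simp] lemma lin2_apply (a b : ℝ) (v : ℝ × ℝ) : lin2 a b v = a * v.1 + b * v.2 := by
  simp [lin2]

noncomputable def nn (q : ℝ × ℝ) : ℝ := Real.sqrt (q.1 ^ 2 + q.2 ^ 2)

lemma nn_pos {q : ℝ × ℝ} (hq : q ≠ 0) : 0 < nn q := by
  have : q.1 ≠ 0 ∨ q.2 ≠ 0 := by
    by_contra h; push_neg at h; exact hq (Prod.ext h.1 h.2)
  have h2 : 0 < q.1 ^ 2 + q.2 ^ 2 := by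
    rcases this with h | h <;> positivity
  exact Real.sqrt_pos.2 h2

lemma nn_sq (q : ℝ × ℝ) : nn q ^ 2 = q.1 ^ 2 + q.2 ^ 2 := by
  have : (0:ℝ) ≤ q.1 ^ 2 + q.2 ^ 2 := by positivity
  simp [nn, Real.sq_sqrt this]

lemma hasFDerivAt_nn {q : ℝ × ℝ} (hq : q ≠ 0) :
    HasFDerivAt nn (lin2 (q.1 / nn q) (q.2 / nn q)) q := by
  have hpos := nn_pos hq
  have hne : q.1 ^ 2 + q.2 ^ 2 ≠ 0 := by nlinarith [nn_sq q]
  have h1 : HasFDerivAt (fun p : ℝ × ℝ => p.1 ^ 2 + p.2 ^ 2)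
      (lin2 (2 * q.1) (2 * q.2)) q := by
    have ha := ((hasFDerivAt_fst (𝕜 := ℝ) (p := q) (E := ℝ) (F := ℝ)).mul
      (hasFDerivAt_fst (𝕜 := ℝ) (p := q))).add
      ((hasFDerivAt_snd (𝕜 := ℝ) (p := q)).mul (hasFDerivAt_snd (𝕜 := ℝ) (p := q)))
    refine (ha.congr_fderiv ?_).congr_of_eventuallyEq ?_
    · refine ContinuousLinearMap.ext fun v => ?_
      simp [lin2]; ring
    · filter_upwards with p; simp only [Pi.add_apply, Pi.mul_apply]; ring
  have h2 := (Real.hasDerivAt_sqrt hne).comp_hasFDerivAt q h1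
  refine h2.congr_fderiv ?_
  refine ContinuousLinearMap.ext fun v => ?_
  have hs : Real.sqrt (q.1 ^ 2 + q.2 ^ 2) = nn q := rfl
  simp [hs]
  field_simp

lemma hasFDerivAt_radial {s : Set (ℝ × ℝ)} (hs : IsOpen s) {q : ℝ × ℝ} (hq : q ∈ s)
    (hq0 : q ≠ 0) {F : ℝ × ℝ → ℝ} {g : ℝ → ℝ} {d : ℝ}
    (hF : ∀ p ∈ s, F p = g (nn p)) (hg : HasDerivAt g d (nn q)) :
    HasFDerivAt F (lin2 (d * q.1 / nn q) (d * q.2 / nn q)) q := by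
  have h1 := hg.comp_hasFDerivAt q (hasFDerivAt_nn hq0)
  have h2 : F =ᶠ[nhds q] fun p => g (nn p) :=
    Filter.eventuallyEq_of_mem (hs.mem_nhds hq) hF
  refine (h1.congr_fderiv ?_).congr_of_eventuallyEq h2
  refine ContinuousLinearMap.ext fun v => ?_
  simp
  ring

lemma grad2_radial {s : Set (ℝ × ℝ)} (hs : IsOpen s) {q : ℝ × ℝ} (hq : q ∈ s)
    (hq0 : q ≠ 0) {F : ℝ × ℝ → ℝ} {g : ℝ → ℝ} {d : ℝ}
    (hF : ∀ p ∈ s, F p = g (nn p)) (hg : HasDerivAt g d (nn q)) :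
    grad2 F q = (d * q.1 / nn q, d * q.2 / nn q) := by
  rw [grad2, (hasFDerivAt_radial hs hq hq0 hF hg).fderiv]
  simp

lemma div2_radial {s : Set (ℝ × ℝ)} (hs : IsOpen s) {q : ℝ × ℝ} (hq : q ∈ s)
    (hq0 : q ≠ 0) {G : ℝ × ℝ → ℝ × ℝ} {g : ℝ → ℝ} {d : ℝ}
    (hG : ∀ p ∈ s, G p = (g (nn p) / nn p * p.1, g (nn p) / nn p * p.2))
    (hg : HasDerivAt g d (nn q)) :
    div2 G q = d + g (nn q) / nn q := by
  have hpos := nn_pos hq0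
  have hne : nn q ≠ 0 := ne_of_gt hpos
  set d' : ℝ := (d * nn q - g (nn q) * 1) / nn q ^ 2 with hd'
  have hh : HasDerivAt (fun t => g t / t) d' (nn q) := hg.div (hasDerivAt_id _) hne
  have hcoef : HasFDerivAt (fun p => g (nn p) / nn p)
      (lin2 (d' * q.1 / nn q) (d' * q.2 / nn q)) q :=
    hasFDerivAt_radial hs hq hq0 (fun p _ => rfl) hh
  have h1 : HasFDerivAt (fun p : ℝ × ℝ => g (nn p) / nn p * p.1)
      ((g (nn q) / nn q) • ContinuousLinearMap.fst ℝ ℝ ℝ +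
        q.1 • lin2 (d' * q.1 / nn q) (d' * q.2 / nn q)) q :=
    hcoef.mul (hasFDerivAt_fst (𝕜 := ℝ) (p := q))
  have h2 : HasFDerivAt (fun p : ℝ × ℝ => g (nn p) / nn p * p.2)
      ((g (nn q) / nn q) • ContinuousLinearMap.snd ℝ ℝ ℝ +
        q.2 • lin2 (d' * q.1 / nn q) (d' * q.2 / nn q)) q :=
    hcoef.mul (hasFDerivAt_snd (𝕜 := ℝ) (p := q))
  have e1 : (fun p => (G p).1) =ᶠ[nhds q] fun p : ℝ × ℝ => g (nn p) / nn p * p.1 :=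
    Filter.eventuallyEq_of_mem (hs.mem_nhds hq) (fun p hp => by rw [hG p hp])
  have e2 : (fun p => (G p).2) =ᶠ[nhds q] fun p : ℝ × ℝ => g (nn p) / nn p * p.2 :=
    Filter.eventuallyEq_of_mem (hs.mem_nhds hq) (fun p hp => by rw [hG p hp])
  rw [div2, e1.fderiv_eq, e2.fderiv_eq, h1.fderiv, h2.fderiv]
  simp
  rw [hd']
  have hsq := nn_sq q
  field_simp
  linear_combination (g (nn q) - d * nn q) * hsq

noncomputable def vv (u : ℝ → ℝ) (r : ℝ) : ℝ := Real.sqrt (1 + deriv u r ^ 2)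
noncomputable def gg (u : ℝ → ℝ) (r : ℝ) : ℝ := deriv u r / vv u r
noncomputable def Hc (u : ℝ → ℝ) (r : ℝ) : ℝ := deriv (gg u) r + gg u r / r
noncomputable def Pf (u : ℝ → ℝ) (r : ℝ) : ℝ := vv u r * Hc u r
noncomputable def ff (u : ℝ → ℝ) (r : ℝ) : ℝ :=
  (1 / vv u r) * (deriv (Pf u) r / vv u r ^ 2 - Hc u r ^ 2 * deriv u r / 2)
noncomputable def Dfun (u : ℝ → ℝ) (s : ℝ) : ℝ :=
  (deriv (deriv (deriv u)) s * (1 + deriv u s ^ 2) -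
    deriv (deriv u) s * (2 * deriv u s * deriv (deriv u) s)) / (1 + deriv u s ^ 2) ^ 2 +
  (deriv (deriv u) s * s - deriv u s * 1) / s ^ 2

section
variable {u : ℝ → ℝ} {ρ : ℝ}

lemma vv_pos (u : ℝ → ℝ) (r : ℝ) : 0 < vv u r := by
  have : (0:ℝ) < 1 + deriv u r ^ 2 := by positivity
  exact Real.sqrt_pos.2 this

lemma vv_sq (u : ℝ → ℝ) (r : ℝ) : vv u r ^ 2 = 1 + deriv u r ^ 2 := by
  have : (0:ℝ) ≤ 1 + deriv u r ^ 2 := by positivity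
  simp [vv, Real.sq_sqrt this]

lemma diffAt_of_cdOn (h : ContDiffOn ℝ (⊤ : ℕ∞) u (Set.Ioo 0 ρ)) {r : ℝ} (hr : r ∈ Set.Ioo 0 ρ) :
    DifferentiableAt ℝ u r :=
  (h.differentiableOn (by simp)).differentiableAt (isOpen_Ioo.mem_nhds hr)

lemma cdOn_deriv (h : ContDiffOn ℝ (⊤ : ℕ∞) u (Set.Ioo 0 ρ)) :
    ContDiffOn ℝ (⊤ : ℕ∞) (deriv u) (Set.Ioo 0 ρ) :=
  h.deriv_of_isOpen isOpen_Ioo (by simp)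

lemma hdw (hu : ContDiffOn ℝ (⊤ : ℕ∞) u (Set.Ioo 0 ρ)) {r : ℝ} (hr : r ∈ Set.Ioo 0 ρ) : HasDerivAt u (deriv u r) r :=
  (diffAt_of_cdOn hu hr).hasDerivAt

lemma hdw1 (hu : ContDiffOn ℝ (⊤ : ℕ∞) u (Set.Ioo 0 ρ)) {r : ℝ} (hr : r ∈ Set.Ioo 0 ρ) :
    HasDerivAt (deriv u) (deriv (deriv u) r) r :=
  (diffAt_of_cdOn (cdOn_deriv hu) hr).hasDerivAt

lemma hdw2 (hu : ContDiffOn ℝ (⊤ : ℕ∞) u (Set.Ioo 0 ρ)) {r : ℝ} (hr : r ∈ Set.Ioo 0 ρ) :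
    HasDerivAt (deriv (deriv u)) (deriv (deriv (deriv u)) r) r :=
  (diffAt_of_cdOn (cdOn_deriv (cdOn_deriv hu)) hr).hasDerivAt

lemma diff_w2 (hu : ContDiffOn ℝ (⊤ : ℕ∞) u (Set.Ioo 0 ρ)) {r : ℝ} (hr : r ∈ Set.Ioo 0 ρ) :
    DifferentiableAt ℝ (deriv (deriv (deriv u))) r :=
  diffAt_of_cdOn (cdOn_deriv (cdOn_deriv (cdOn_deriv hu))) hr

lemma hdvv (hu : ContDiffOn ℝ (⊤ : ℕ∞) u (Set.Ioo 0 ρ)) {r : ℝ} (hr : r ∈ Set.Ioo 0 ρ) :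
    HasDerivAt (vv u) (deriv u r * deriv (deriv u) r / vv u r) r := by
  have h1 : HasDerivAt (fun s => 1 + deriv u s ^ 2)
      (2 * deriv u r * deriv (deriv u) r) r := by
    have := ((hdw1 hu hr).pow 2).const_add 1
    refine this.congr_deriv ?_
    ring
  have h0 : (1 : ℝ) + deriv u r ^ 2 ≠ 0 := by positivity
  have h2 := h1.sqrt h0
  refine h2.congr_deriv ?_
  rw [show Real.sqrt (1 + deriv u r ^ 2) = vv u r from rfl]
  have := vv_pos u r
  field_simp

lemma hdgg (hu : ContDiffOn ℝ (⊤ : ℕ∞) u (Set.Ioo 0 ρ)) {r : ℝ} (hr : r ∈ Set.Ioo 0 ρ) :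
    HasDerivAt (gg u) (deriv (deriv u) r / vv u r ^ 3) r := by
  have h := (hdw1 hu hr).div (hdvv hu hr) (ne_of_gt (vv_pos u r))
  refine h.congr_deriv ?_
  have hv := vv_pos u r
  have hv2 := vv_sq u r
  field_simp
  linear_combination (deriv (deriv u) r) * hv2

lemma deriv_gg (hu : ContDiffOn ℝ (⊤ : ℕ∞) u (Set.Ioo 0 ρ)) {r : ℝ} (hr : r ∈ Set.Ioo 0 ρ) :
    deriv (gg u) r = deriv (deriv u) r / vv u r ^ 3 := (hdgg hu hr).deriv

lemma Hc_eq (hu : ContDiffOn ℝ (⊤ : ℕ∞) u (Set.Ioo 0 ρ)) {r : ℝ} (hr : r ∈ Set.Ioo 0 ρ) :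
    Hc u r = deriv (deriv u) r / vv u r ^ 3 + deriv u r / (r * vv u r) := by
  rw [Hc, deriv_gg hu hr, gg]
  ring

lemma Pf_eq (hu : ContDiffOn ℝ (⊤ : ℕ∞) u (Set.Ioo 0 ρ)) {r : ℝ} (hr : r ∈ Set.Ioo 0 ρ) :
    Pf u r = deriv (deriv u) r / (1 + deriv u r ^ 2) + deriv u r / r := by
  have hv := vv_pos u r
  have hv2 := vv_sq u r
  have hr0 : r ≠ 0 := ne_of_gt hr.1
  rw [Pf, Hc_eq hu hr]
  have h1 : (1:ℝ) + deriv u r ^ 2 ≠ 0 := by positivity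
  field_simp
  linear_combination (-(deriv (deriv u) r * r)) * hv2

lemma hdden (hu : ContDiffOn ℝ (⊤ : ℕ∞) u (Set.Ioo 0 ρ)) {r : ℝ} (hr : r ∈ Set.Ioo 0 ρ) :
    HasDerivAt (fun s => 1 + deriv u s ^ 2) (2 * deriv u r * deriv (deriv u) r) r := by
  have := ((hdw1 hu hr).pow 2).const_add 1
  refine this.congr_deriv ?_
  ring

lemma hdPf (hu : ContDiffOn ℝ (⊤ : ℕ∞) u (Set.Ioo 0 ρ)) {r : ℝ} (hr : r ∈ Set.Ioo 0 ρ) :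
    HasDerivAt (Pf u) (Dfun u r) r := by
  have hr0 : r ≠ 0 := ne_of_gt hr.1
  have h1 : (1:ℝ) + deriv u r ^ 2 ≠ 0 := by positivity
  have ha := (hdw2 hu hr).div (hdden hu hr) h1
  have hb := (hdw1 hu hr).div (hasDerivAt_id r) hr0
  have hab := ha.add hb
  have heq : Pf u =ᶠ[nhds r]
      fun s => deriv (deriv u) s / (1 + deriv u s ^ 2) + deriv u s / s :=
    Filter.eventuallyEq_of_mem (isOpen_Ioo.mem_nhds hr) (fun s hs => Pf_eq hu hs)
  refine HasDerivAt.congr_of_eventuallyEq ?_ heq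
  exact hab

lemma deriv_Pf (hu : ContDiffOn ℝ (⊤ : ℕ∞) u (Set.Ioo 0 ρ)) {r : ℝ} (hr : r ∈ Set.Ioo 0 ρ) :
    deriv (Pf u) r = Dfun u r := (hdPf hu hr).deriv

noncomputable def ff2 (u : ℝ → ℝ) (s : ℝ) : ℝ :=
  (1 / vv u s) * (Dfun u s / (1 + deriv u s ^ 2) -
    (deriv (deriv u) s / vv u s ^ 3 + deriv u s / (s * vv u s)) ^ 2 * deriv u s / 2)

lemma ff_eq (hu : ContDiffOn ℝ (⊤ : ℕ∞) u (Set.Ioo 0 ρ)) {r : ℝ} (hr : r ∈ Set.Ioo 0 ρ) :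
    ff u r = ff2 u r := by
  rw [ff, ff2, deriv_Pf hu hr, Hc_eq hu hr, vv_sq u r]

lemma diff_ff (hu : ContDiffOn ℝ (⊤ : ℕ∞) u (Set.Ioo 0 ρ)) {r : ℝ} (hr : r ∈ Set.Ioo 0 ρ) :
    DifferentiableAt ℝ (ff u) r := by
  have heq : ff u =ᶠ[nhds r] ff2 u :=
    Filter.eventuallyEq_of_mem (isOpen_Ioo.mem_nhds hr) (fun s hs => ff_eq hu hs)
  rw [Filter.EventuallyEq.differentiableAt_iff heq]
  have hr0 : r ≠ 0 := ne_of_gt hr.1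
  have hv := vv_pos u r
  have hvne : vv u r ≠ 0 := ne_of_gt hv
  have h1 : (1:ℝ) + deriv u r ^ 2 ≠ 0 := by positivity
  have dv : DifferentiableAt ℝ (vv u) r := (hdvv hu hr).differentiableAt
  have dw : DifferentiableAt ℝ (deriv u) r := (hdw1 hu hr).differentiableAt
  have dw1 : DifferentiableAt ℝ (deriv (deriv u)) r := (hdw2 hu hr).differentiableAt
  have dw2 : DifferentiableAt ℝ (deriv (deriv (deriv u))) r := diff_w2 hu hr
  have dden : DifferentiableAt ℝ (fun s => 1 + deriv u s ^ 2) r :=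
    (dw.pow 2).const_add 1
  have dD : DifferentiableAt ℝ (Dfun u) r := by
    unfold Dfun
    exact (((dw2.mul dden).sub
        (dw1.mul (((differentiableAt_const (2:ℝ)).mul dw).mul dw1))).div (dden.pow 2)
        (pow_ne_zero 2 h1)).add
      (((dw1.mul differentiableAt_fun_id).sub (dw.mul (differentiableAt_const 1))).div
        (differentiableAt_fun_id.pow 2) (pow_ne_zero 2 hr0))
  refine ((differentiableAt_const (1:ℝ)).div dv hvne).mul ?_
  refine DifferentiableAt.sub (dD.div dden h1) ?_
  refine DifferentiableAt.div ?_ (differentiableAt_const 2) two_ne_zero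
  refine DifferentiableAt.mul ?_ dw
  refine DifferentiableAt.pow ?_ 2
  refine DifferentiableAt.add (dw1.div (dv.pow 3) (by positivity)) ?_
  exact dw.div (differentiableAt_fun_id.mul dv) (by simp [hr0, hvne])
end


set_option maxHeartbeats 1000000 in
lemma alg (a b c V r : ℝ) (hr : r ≠ 0) (hV : 0 < V) (hv2 : V ^ 2 = 1 + a ^ 2) :
    c + (b * r - a) / r ^ 2
      = 5 * a / (2 * (1 + a ^ 2)) * b ^ 2 + a ^ 3 / (2 * r ^ 2) * (3 + a ^ 2)
        + (1 / V * (((c * (1 + a ^ 2) - b * (2 * a * b)) / (1 + a ^ 2) ^ 2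
            + (b * r - a * 1) / r ^ 2) / (1 + a ^ 2)
           - (b / V ^ 3 + a / (r * V)) ^ 2 * a / 2)) * V ^ 5 := by
  have hVne : V ≠ 0 := ne_of_gt hV
  have h1 : (1:ℝ) + a ^ 2 ≠ 0 := by positivity
  field_simp
  linear_combination ((-2) * a ^ 4 * c ^ 1 * V ^ 2 * r ^ 2 + (-4) * a ^ 2 * c ^ 1 * V ^ 2 * r ^ 2 + (-2) * c ^ 1 * V ^ 2 * r ^ 2 + (-6) * a ^ 4 * b ^ 1 * V ^ 2 * r ^ 1 + (-6) * a ^ 2 * b ^ 1 * V ^ 2 * r ^ 1 + (-2) * b ^ 1 * V ^ 2 * r ^ 1 + (9) * a ^ 5 * V ^ 2 + (7) * a ^ 3 * V ^ 2 + (2) * a ^ 1 * V ^ 2 + (4) * a ^ 3 * b ^ 2 * V ^ 2 * r ^ 2 + (1) * a ^ 9 * V ^ 2 + (5) * a ^ 7 * V ^ 2 + (4) * a ^ 1 * b ^ 2 * V ^ 2 * r ^ 2 + (-1) * a ^ 5 * b ^ 2 * r ^ 2 + (-2) * a ^ 6 * b ^ 1 * V ^ 2 * r ^ 1 + (-2)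 * a ^ 3 * b ^ 2 * r ^ 2 + (2) * a ^ 5 * V ^ 4 + (-1) * a ^ 1 * b ^ 2 * r ^ 2 + (4) * a ^ 3 * V ^ 4 + (2) * a ^ 1 * V ^ 4 + (-2) * a ^ 2 * c ^ 1 * V ^ 4 * r ^ 2 + (-2) * c ^ 1 * V ^ 4 * r ^ 2 + (-4) * a ^ 2 * b ^ 1 * V ^ 4 * r ^ 1 + (-2) * b ^ 1 * V ^ 4 * r ^ 1 + (4) * a ^ 1 * b ^ 2 * V ^ 4 * r ^ 2 + (-2) * a ^ 4 * b ^ 1 * V ^ 4 * r ^ 1) * hv2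

set_option maxHeartbeats 1000000 in
/-- If `u ∈ C^∞(D(ρ)\{0})` is radially symmetric and solves the Willmore
graph equation on the punctured disk, then there exists `λ ∈ ℝ` such that the radial
flux satisfies `f(r) = λ/r`; equivalently `w = u'` satisfies
`w'' + (w/r)' = (5w/(2(1+w²)))(w')² + (w³/(2r²))(3+w²) + (λ/r)(1+w²)^{5/2}` on `(0,ρ)`. -/
theorem stmt_15 (ρ : ℝ) (hρ : 0 < ρ) (U : ℝ × ℝ → ℝ) (u : ℝ → ℝ)
    (hU : ContDiffOn ℝ (⊤ : ℕ∞) U ({q : ℝ × ℝ | q.1 ^ 2 + q.2 ^ 2 < ρ ^ 2} \ {0}))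
    (hu : ContDiffOn ℝ (⊤ : ℕ∞) u (Set.Ioo 0 ρ))
    (hrad : ∀ q : ℝ × ℝ, q ∈ ({q : ℝ × ℝ | q.1 ^ 2 + q.2 ^ 2 < ρ ^ 2} \ {0}) →
      U q = u (Real.sqrt (q.1 ^ 2 + q.2 ^ 2)))
    (hW : ∀ q : ℝ × ℝ, q ∈ ({q : ℝ × ℝ | q.1 ^ 2 + q.2 ^ 2 < ρ ^ 2} \ {0}) →
      div2 (willmoreVF U) q = 0) :
    ∃ lam : ℝ, ∀ r ∈ Set.Ioo 0 ρ,
      (willmoreVF U ((r, 0) : ℝ × ℝ)).1 = lam / r ∧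
      deriv (deriv (deriv u)) r + deriv (fun t => deriv u t / t) r
        = 5 * deriv u r / (2 * (1 + (deriv u r) ^ 2)) * (deriv (deriv u) r) ^ 2
          + (deriv u r) ^ 3 / (2 * r ^ 2) * (3 + (deriv u r) ^ 2)
          + (lam / r) * (Real.sqrt (1 + (deriv u r) ^ 2)) ^ 5 := by
  set S : Set (ℝ × ℝ) := {q : ℝ × ℝ | q.1 ^ 2 + q.2 ^ 2 < ρ ^ 2} \ {0} with hSdef
  have hSopen : IsOpen S := by
    rw [hSdef, Set.diff_eq]
    exact (isOpen_lt (by continuity) continuous_const).inter isClosed_singleton.isOpen_compl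
  have hSne : ∀ q ∈ S, q ≠ 0 := fun q hq => by
    have := hq.2; simpa using this
  have hnnI : ∀ q ∈ S, nn q ∈ Set.Ioo 0 ρ := by
    intro q hq
    refine ⟨nn_pos (hSne q hq), ?_⟩
    have h1 : q.1 ^ 2 + q.2 ^ 2 < ρ ^ 2 := hq.1
    have h2 := Real.sqrt_lt_sqrt (by positivity) h1
    rwa [Real.sqrt_sq hρ.le] at h2
  -- (1) gradient of U is radial
  have hgradU : ∀ q ∈ S, grad2 U q
      = (deriv u (nn q) * q.1 / nn q, deriv u (nn q) * q.2 / nn q) := by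
    intro q hq
    exact grad2_radial hSopen hq (hSne q hq) (fun p hp => hrad p hp) (hdw hu (hnnI q hq))
  -- (2) area element is radial
  have harea : ∀ q ∈ S, areaEl U q = vv u (nn q) := by
    intro q hq
    rw [areaEl, hgradU q hq]
    show Real.sqrt _ = Real.sqrt _
    congr 1
    have hn := nn_pos (hSne q hq)
    have hnsq := nn_sq q
    field_simp
    linear_combination (-(deriv u (nn q)) ^ 2) * hnsq
  -- (3) mean curvature is radial
  have hmean : ∀ q ∈ S, meanCurv U q = Hc u (nn q) := by
    intro q hq
    rw [meanCurv]
    have hdg := hdgg hu (hnnI q hq)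
    have hdivr := div2_radial hSopen hq (hSne q hq)
      (G := fun p => ((grad2 U p).1 / areaEl U p, (grad2 U p).2 / areaEl U p))
      (g := gg u) (d := deriv (deriv u) (nn q) / vv u (nn q) ^ 3)
      (fun p hp => by
        rw [hgradU p hp, harea p hp]
        have hn := nn_pos (hSne p hp)
        have hv := vv_pos u (nn p)
        simp only [gg, Prod.mk.injEq]
        constructor <;> ring) hdg
    rw [hdivr, Hc, deriv_gg hu (hnnI q hq)]
  -- (4) gradient of v*H is radial
  have hPg : ∀ q ∈ S, grad2 (fun p => areaEl U p * meanCurv U p) q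
      = (Dfun u (nn q) * q.1 / nn q, Dfun u (nn q) * q.2 / nn q) := by
    intro q hq
    exact grad2_radial hSopen hq (hSne q hq) (g := Pf u)
      (fun p hp => by rw [harea p hp, hmean p hp, Pf]) (hdPf hu (hnnI q hq))
  -- (5) willmore vector field is radial with profile ff
  have hVF : ∀ q ∈ S, willmoreVF U q
      = (ff u (nn q) / nn q * q.1, ff u (nn q) / nn q * q.2) := by
    intro q hq
    rw [willmoreVF, hgradU q hq, harea q hq, hmean q hq, hPg q hq,
      ff, deriv_Pf hu (hnnI q hq)]
    have hn := nn_pos (hSne q hq)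
    have hnsq := nn_sq q
    have hv := vv_pos u (nn q)
    have hv2 := vv_sq u (nn q)
    simp only [Prod.smul_mk, Prod.mk_sub_mk, Prod.mk.injEq, smul_eq_mul]
    constructor
    · field_simp
      linear_combination (2*Dfun u (nn q)*q.1*deriv u (nn q)^2) * hnsq
        + (2*Dfun u (nn q)*q.1*nn q^2) * hv2
    · field_simp
      linear_combination (2*Dfun u (nn q)*q.2*deriv u (nn q)^2) * hnsq
        + (2*Dfun u (nn q)*q.2*nn q^2) * hv2
  -- (6) the ODE (r f)' = 0
  have hmemS : ∀ r ∈ Set.Ioo 0 ρ, ((r, 0) : ℝ × ℝ) ∈ S := by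
    intro r hr
    constructor
    · show r ^ 2 + 0 ^ 2 < ρ ^ 2
      have : r ^ 2 < ρ ^ 2 := by nlinarith [hr.1, hr.2]
      simpa using this
    · simp only [Set.mem_singleton_iff]
      intro h
      exact (ne_of_gt hr.1) (congrArg Prod.fst h)
  have hnnr : ∀ r ∈ Set.Ioo 0 ρ, nn ((r, 0) : ℝ × ℝ) = r := by
    intro r hr
    show Real.sqrt (r ^ 2 + 0 ^ 2) = r
    rw [show r ^ 2 + 0 ^ 2 = r ^ 2 by ring, Real.sqrt_sq hr.1.le]
  have hODE : ∀ r ∈ Set.Ioo 0 ρ, deriv (ff u) r + ff u r / r = 0 := by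
    intro r hr
    have hrS := hmemS r hr
    have hnn := hnnr r hr
    have hgf : HasDerivAt (ff u) (deriv (ff u) r) (nn ((r, 0) : ℝ × ℝ)) := by
      rw [hnn]; exact (diff_ff hu hr).hasDerivAt
    have hd := div2_radial hSopen hrS (hSne _ hrS) (G := willmoreVF U) (g := ff u)
      (fun p hp => by rw [hVF p hp]) hgf
    rw [hW _ hrS] at hd
    rw [hnn] at hd
    linarith [hd]
  -- (7) r * f r is constant
  have hF : ∀ x ∈ Set.Ioo 0 ρ, HasDerivAt (fun s => s * ff u s) 0 x := by
    intro x hx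
    have h := (hasDerivAt_id x).mul ((diff_ff hu hx).hasDerivAt)
    have hode := hODE x hx
    have hx0 : x ≠ 0 := ne_of_gt hx.1
    refine h.congr_deriv ?_
    have : deriv (ff u) x = -(ff u x / x) := by linarith [hode]
    rw [this]
    field_simp
    simp only [id_eq]; ring
  have key : ∀ a b : ℝ, a ∈ Set.Ioo 0 ρ → b ∈ Set.Ioo 0 ρ → a < b →
      a * ff u a = b * ff u b := by
    intro a b ha hb hab
    have hsub : Set.Icc a b ⊆ Set.Ioo 0 ρ := fun x hx =>
      ⟨lt_of_lt_of_le ha.1 hx.1, lt_of_le_of_lt hx.2 hb.2⟩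
    obtain ⟨c, _, hc2⟩ := exists_hasDerivAt_eq_slope (fun s => s * ff u s) (fun _ => 0) hab
      (fun x hx => ((hF x (hsub hx)).continuousAt).continuousWithinAt)
      (fun x hx => hF x (hsub (Set.Ioo_subset_Icc_self hx)))
    have hne : b - a ≠ 0 := by linarith
    have hc3 : b * ff u b - a * ff u a = 0 := by
      rcases div_eq_zero_iff.1 hc2.symm with h | h
      · exact h
      · exact absurd h hne
    linarith [hc3]
  have hmid : ρ / 2 ∈ Set.Ioo 0 ρ := ⟨by linarith, by linarith⟩
  refine ⟨(ρ / 2) * ff u (ρ / 2), ?_⟩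
  intro r hr
  have hr0 : r ≠ 0 := ne_of_gt hr.1
  have hconst : r * ff u r = (ρ / 2) * ff u (ρ / 2) := by
    rcases lt_trichotomy r (ρ / 2) with h | h | h
    · exact key r (ρ / 2) hr hmid h
    · rw [h]
    · exact (key (ρ / 2) r hmid hr h).symm
  have hfr : ff u r = (ρ / 2) * ff u (ρ / 2) / r := by
    rw [← hconst]; field_simp
  constructor
  · rw [hVF _ (hmemS r hr), hnnr r hr, hfr]
    field_simp
  · have hd3 := ((hdw1 hu hr).div (hasDerivAt_id r) hr0).deriv
    simp only [id_eq, mul_one] at hd3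
    rw [show (fun t => deriv u t / t) = deriv u / id from rfl, hd3]
    have hE : ff2 u r = (ρ / 2) * ff u (ρ / 2) / r := by
      rw [← ff_eq hu hr]; exact hfr
    rw [show Real.sqrt (1 + deriv u r ^ 2) = vv u r from rfl]
    rw [← hE]
    have hv := vv_pos u r
    have hv2 := vv_sq u r
    simp only [ff2, Dfun]
    exact alg (deriv u r) (deriv (deriv u) r) (deriv (deriv (deriv u)) r) (vv u r) r hr0 hv hv2
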